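/- In the duplicated gadget construction with ℓ copies x_1, …, x_ℓ of the vertex x, there exists a feasible edge set (one in which every ordered pair (p,q) has a q–p path all of whose vertices lie in the iBGP safe set S(p,q)) with at most ℓ · h* + ℓ + (m + n + 4)² edges, where h* is the minimum size of a hitting set for the instance T_1, …, T_m ⊆ [n]. -/

import Mathlib

/-- The vertices of the duplicated hitting-set gadget: `ℓ` copies `x k` of the
vertex `x`, dummy nodes `z`, `y`, `u`, `h`, element nodes `a i` for `i ∈ [n]`
and set nodes `b j` for `j ∈ [m]`. -/
inductive GV (L n m : ℕ) : Type
  | x : Fin L → GV L n m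
  | z : GV L n m
  | y : GV L n m
  | u : GV L n m
  | h : GV L n m
  | a : Fin n → GV L n m
  | b : Fin m → GV L n m
deriving DecidableEq

/-- `d` is a pseudometric (reflexive, symmetric, triangle inequality). -/
def IsPseudoMetric {α : Type*} (d : α → α → ℝ) : Prop :=
  (∀ p, d p p = 0) ∧ (∀ p q, d p q = d q p) ∧ (∀ p q r, d p r ≤ d p q + d q r)

/-- `d` is bounded above by the prescribed edge weights of the duplicated gadget
(indices are 1-based, via `·.val + 1`). -/
def GadgetEdgeBounds {L n m : ℕ} (T : Fin m → Finset (Fin n)) (ε : ℝ)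
    (d : GV L n m → GV L n m → ℝ) : Prop :=
  (∀ k : Fin L, d (GV.x k) GV.z ≤ 20 + (k.val + 1) * ε) ∧
  (∀ k : Fin L, ∀ j : Fin m,
    d (GV.x k) (GV.b j) ≤ 20 + 1.4 + ((k.val + 1) + (j.val + 1)) * ε) ∧
  d GV.z GV.y ≤ 1.5 ∧
  (∀ i : Fin n, d GV.z (GV.a i) ≤ 1 + (i.val + 1) * ε) ∧
  d GV.z GV.u ≤ 2 ∧
  (∀ i : Fin n, d (GV.a i) GV.u ≤ 1.1) ∧
  (∀ i : Fin n, ∀ j : Fin m, i ∈ T j →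
    d (GV.a i) (GV.b j) ≤ 1 + ((i.val + 1) + (j.val + 1)) * ε) ∧
  (∀ j : Fin m, d (GV.b j) GV.h ≤ 1 + (j.val + 1) * ε)

/-- `d` is the shortest-path metric of the duplicated gadget graph: it is the
pointwise greatest pseudometric bounded above by the gadget edge weights. -/
def IsGadgetSPMetric {L n m : ℕ} (T : Fin m → Finset (Fin n)) (ε : ℝ)
    (d : GV L n m → GV L n m → ℝ) : Prop :=
  IsPseudoMetric d ∧ GadgetEdgeBounds T ε d ∧
  ∀ d' : GV L n m → GV L n m → ℝ, IsPseudoMetric d' → GadgetEdgeBounds T ε d' →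
    ∀ p q, d' p q ≤ d p q

/-- The iBGP safe set of the ordered pair `(p,q)` for the metric `d`. -/
def iBGPSafeSet {α : Type*} (d : α → α → ℝ) (p q : α) : Set α :=
  {w | ∀ r, d p q < d p r → d w q < d w r} ∪ {q}

/-- `E` is a correct iBGP signaling graph: every ordered pair `(p,q)` has a
path from `q` to `p` all of whose vertices lie in the safe set `S(p,q)`. -/
def iBGPFeasible {α : Type*} (d : α → α → ℝ) (E : Set (Sym2 α)) : Prop :=
  ∀ p q : α, ∃ w : (SimpleGraph.fromEdgeSet E).Walk q p,
    ∀ v ∈ w.support, v ∈ iBGPSafeSet d p q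

/-- `Hs` is a hitting set for the instance `T`. -/
def IsHittingSet {n m : ℕ} (T : Fin m → Finset (Fin n)) (Hs : Finset (Fin n)) : Prop :=
  ∀ j : Fin m, ∃ i ∈ Hs, i ∈ T j

/-!
The edge set is a clique on the `m + n + 4` vertices other than the copies `x k`, the edges
`x k z`, and the edges `x k a i` for `i` in a minimum hitting set. A pair `(p, q)` is served by a
direct edge, by a path through `z`, or, for `(x k, b j)`, by the path `b j, a i, x k` with
`i ∈ T j` in the hitting set.

Safety of an intermediate vertex only compares distances, and the comparisons needed are forced
by the gadget: upper bounds come from the triangle inequality along edges, lower bounds from the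
potentials `lowerDist ε c`, which are `1`-Lipschitz along the edges and hence dominated by `d`,
the greatest such pseudometric. Together they determine `d (x k) v` exactly for every `v` other
than a copy of `x`, so the vertices farther from `x k` than `q` are known explicitly; the
`ε`-perturbations keep the comparisons between copies, elements and sets strict.
-/

open SimpleGraph Finset

section SafeWalks

variable {α : Type*} {d : α → α → ℝ} {E : Set (Sym2 α)} {p q w : α}

def HasSafeWalk (d : α → α → ℝ) (E : Set (Sym2 α)) (p q : α) : Prop :=
  ∃ W : (fromEdgeSet E).Walk q p, ∀ v ∈ W.support, v ∈ iBGPSafeSet d p q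

theorem left_mem_iBGPSafeSet : p ∈ iBGPSafeSet d p q := Or.inl fun _ h => h

theorem right_mem_iBGPSafeSet : q ∈ iBGPSafeSet d p q := Or.inr rfl

theorem IsPseudoMetric.symm (hd : IsPseudoMetric d) (p q : α) : d p q = d q p :=
  hd.2.1 p q

theorem IsPseudoMetric.triangle (hd : IsPseudoMetric d) (p q r : α) : d p r ≤ d p q + d q r :=
  hd.2.2 p q r

theorem IsPseudoMetric.add {d' : α → α → ℝ} (hd : IsPseudoMetric d)
    (hd' : IsPseudoMetric d') : IsPseudoMetric fun p q => d p q + d' p q :=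
  ⟨fun p => by simp [hd.1 p, hd'.1 p], fun p q => by beta_reduce; rw [hd.symm, hd'.symm],
    fun p q r => by linarith [hd.triangle p q r, hd'.triangle p q r]⟩

theorem isPseudoMetric_abs_sub (f : α → ℝ) : IsPseudoMetric fun p q => |f p - f q| :=
  ⟨fun _ => by simp, fun _ _ => abs_sub_comm _ _, fun _ _ _ => abs_sub_le _ _ _⟩

theorem IsPseudoMetric.mem_iBGPSafeSet_of_add_le (hd : IsPseudoMetric d)
    (hw : d p w + d w q ≤ d p q) : w ∈ iBGPSafeSet d p q :=
  Or.inl fun r hr => by linarith [hd.triangle p w r]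

theorem hasSafeWalk_self (p : α) : HasSafeWalk d E p p :=
  ⟨.nil, by simp [right_mem_iBGPSafeSet]⟩

theorem hasSafeWalk_of_mem (he : s(q, p) ∈ E) (hne : q ≠ p) : HasSafeWalk d E p q :=
  ⟨.cons ((fromEdgeSet_adj E).2 ⟨he, hne⟩) .nil,
    by simp [left_mem_iBGPSafeSet, right_mem_iBGPSafeSet]⟩

theorem hasSafeWalk_of_mem_of_mem (hqw : s(q, w) ∈ E) (hwp : s(w, p) ∈ E) (hqw_ne : q ≠ w)
    (hwp_ne : w ≠ p) (hw : w ∈ iBGPSafeSet d p q) : HasSafeWalk d E p q :=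
  ⟨.cons ((fromEdgeSet_adj E).2 ⟨hqw, hqw_ne⟩)
      (.cons ((fromEdgeSet_adj E).2 ⟨hwp, hwp_ne⟩) .nil),
    by simp [hw, left_mem_iBGPSafeSet, right_mem_iBGPSafeSet]⟩

end SafeWalks

theorem IsHittingSet.nonempty {n m : ℕ} {T : Fin m → Finset (Fin n)} {Hs : Finset (Fin n)}
    (hHs : IsHittingSet T Hs) (j : Fin m) : (T j).Nonempty :=
  let ⟨i, _, hi⟩ := hHs j
  ⟨i, hi⟩

namespace GV

variable {L n m : ℕ}

structure SmallWeights (L n m : ℕ) (ε : ℝ) : Prop where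
  pos : 0 < ε
  x : ∀ k : Fin L, ε ≤ (k.val + 1) * ε ∧ (k.val + 1) * ε ≤ 1 / 100
  a : ∀ i : Fin n, ε ≤ (i.val + 1) * ε ∧ (i.val + 1) * ε ≤ 1 / 100
  b : ∀ j : Fin m, ε ≤ (j.val + 1) * ε ∧ (j.val + 1) * ε ≤ 1 / 100

theorem smallWeights_of_lt {ε : ℝ} (hε : 0 < ε) (hε' : ε < 1 / (100 * (L + n + m + 1))) :
    SmallWeights L n m ε := by
  rw [lt_div_iff₀ (by positivity)] at hε'
  have key : ∀ {N : ℕ} (k : Fin N), N ≤ L + n + m →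
      ε ≤ (k.val + 1) * ε ∧ (k.val + 1) * ε ≤ 1 / 100 := by
    intro N k hN
    have : (k.val + 1 : ℝ) ≤ L + n + m + 1 := by
      exact_mod_cast (by omega : k.val + 1 ≤ L + n + m + 1)
    exact ⟨le_mul_of_one_le_left hε.le (by simp), by nlinarith⟩
  exact ⟨hε, fun k => key k (by omega), fun i => key i (by omega), fun j => key j (by omega)⟩

def core : Finset (GV L n m) := {z, y, u, h} ∪ univ.image a ∪ univ.image b

theorem x_notMem_core (k : Fin L) : x k ∉ (core : Finset (GV L n m)) := by
  simp [core]

theorem eq_x_or_mem_core (v : GV L n m) : (∃ k, v = x k) ∨ v ∈ core := by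
  cases v <;> simp [core]

theorem card_core_le : #(core : Finset (GV L n m)) ≤ m + n + 4 := by
  calc #(core : Finset (GV L n m))
      ≤ #({z, y, u, h} : Finset (GV L n m)) + #(univ.image a) + #(univ.image b) :=
        (card_union_le _ _).trans (by gcongr; exact card_union_le _ _)
    _ ≤ 4 + n + m := by
        gcongr
        · exact card_le_four
        all_goals exact card_image_le.trans (by simp)
    _ = m + n + 4 := by ring

def feasibleEdges (Hs : Finset (Fin n)) : Finset (Sym2 (GV L n m)) :=
  (core ×ˢ core).image (fun vw => s(vw.1, vw.2)) ∪ univ.image (fun k => s(x k, z)) ∪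
    (univ ×ˢ Hs).image fun ki => s(x ki.1, a ki.2)

theorem card_feasibleEdges_le (Hs : Finset (Fin n)) :
    #(feasibleEdges Hs : Finset (Sym2 (GV L n m))) ≤ L * #Hs + L + (m + n + 4) ^ 2 := by
  calc #(feasibleEdges Hs : Finset (Sym2 (GV L n m)))
      ≤ #(core ×ˢ core : Finset (GV L n m × GV L n m)) + #(univ : Finset (Fin L)) +
          #(univ ×ˢ Hs) :=
        (card_union_le _ _).trans <| add_le_add
          ((card_union_le _ _).trans <| add_le_add card_image_le card_image_le) card_image_le
    _ ≤ (m + n + 4) ^ 2 + L + L * #Hs := by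
        rw [card_product, card_product, sq, card_univ, Fintype.card_fin]
        gcongr <;> exact card_core_le
    _ = L * #Hs + L + (m + n + 4) ^ 2 := by ring

theorem mk_mem_feasibleEdges {Hs : Finset (Fin n)} {v w : GV L n m} (hv : v ∈ core)
    (hw : w ∈ core) : s(v, w) ∈ feasibleEdges Hs := by
  simp only [feasibleEdges, mem_union]
  exact Or.inl (Or.inl (mem_image.2 ⟨(v, w), mem_product.2 ⟨hv, hw⟩, rfl⟩))

theorem mk_x_z_mem_feasibleEdges {Hs : Finset (Fin n)} (k : Fin L) :
    s(x k, z) ∈ (feasibleEdges Hs : Finset (Sym2 (GV L n m))) := by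
  simp [feasibleEdges]

theorem mk_x_a_mem_feasibleEdges {Hs : Finset (Fin n)} (k : Fin L) {i : Fin n} (hi : i ∈ Hs) :
    s(x k, a i) ∈ (feasibleEdges Hs : Finset (Sym2 (GV L n m))) := by
  simp only [feasibleEdges, mem_union]
  exact Or.inr (mem_image.2 ⟨(k, i), mem_product.2 ⟨mem_univ k, hi⟩, rfl⟩)

/-- Row `c` is a potential vanishing at `c` and `1`-Lipschitz along the gadget edges. -/
def lowerDist (ε : ℝ) : GV L n m → GV L n m → ℝ
  | x k₀, x k => if k = k₀ then 0 else 40 + (k₀.val + 1) * ε + (k.val + 1) * ε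
  | x k₀, z => 20 + (k₀.val + 1) * ε
  | x k₀, y => 21.5 + (k₀.val + 1) * ε
  | x k₀, u => 22 + (k₀.val + 1) * ε
  | x k₀, h => 22.4 + 2 * ε + (k₀.val + 1) * ε
  | x k₀, a i => 21 + (k₀.val + 1) * ε + (i.val + 1) * ε
  | x k₀, b j => 21.4 + (k₀.val + 1) * ε + (j.val + 1) * ε
  | z, x k => 20 + (k.val + 1) * ε
  | z, z => 0
  | z, y => 1.5
  | z, u => 2
  | z, h => 3
  | z, a i => 1 + (i.val + 1) * ε
  | z, b j => 2 + (j.val + 1) * ε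
  | y, x k => 21.5 + (k.val + 1) * ε
  | y, z => 1.5
  | y, y => 0
  | y, u => 3.5
  | y, h => 4.5
  | y, a i => 2.5 + (i.val + 1) * ε
  | y, b j => 3.5 + (j.val + 1) * ε
  | u, x k => 22 + (k.val + 1) * ε
  | u, z => 2
  | u, y => 3.5
  | u, u => 0
  | u, h => 3.1
  | u, a _ => 1.1
  | u, b j => 2.1 + (j.val + 1) * ε
  | h, x k => 22.4 + 2 * ε + (k.val + 1) * ε
  | h, z => 3
  | h, y => 4.5
  | h, u => 3.1
  | h, h => 0
  | h, a i => 2 + (i.val + 1) * ε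
  | h, b j => 1 + (j.val + 1) * ε
  | a i₀, x k => 21 + (i₀.val + 1) * ε + (k.val + 1) * ε
  | a i₀, z => 1 + (i₀.val + 1) * ε
  | a i₀, y => 2.5 + (i₀.val + 1) * ε
  | a _, u => 1.1
  | a i₀, h => 2 + (i₀.val + 1) * ε
  | a i₀, a i => if i = i₀ then 0 else 2 + (i₀.val + 1) * ε + (i.val + 1) * ε
  | a i₀, b j => 1 + (i₀.val + 1) * ε + (j.val + 1) * ε
  | b j₀, x k => 21.4 + (j₀.val + 1) * ε + (k.val + 1) * ε
  | b j₀, z => 2 + (j₀.val + 1) * ε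
  | b j₀, y => 3.5 + (j₀.val + 1) * ε
  | b j₀, u => 2.1 + (j₀.val + 1) * ε
  | b j₀, h => 1 + (j₀.val + 1) * ε
  | b j₀, a i => 1 + (j₀.val + 1) * ε + (i.val + 1) * ε
  | b j₀, b j => if j = j₀ then 0 else 2 + (j₀.val + 1) * ε + (j.val + 1) * ε

theorem lowerDist_self (ε : ℝ) (c : GV L n m) : lowerDist ε c c = 0 := by
  cases c <;> simp [lowerDist]

section Table

variable {ε : ℝ}

theorem gadgetEdgeBounds_lowerDist {T : Fin m → Finset (Fin n)}
    (hw : SmallWeights L n m ε) (c : GV L n m) :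
    GadgetEdgeBounds T ε fun p q => |lowerDist ε c p - lowerDist ε c q| := by
  obtain ⟨hε, hx, ha, hb⟩ := hw
  cases c <;> simp only [GadgetEdgeBounds, lowerDist] <;> grind

theorem lowerDist_x_le_lowerDist_x_h (hw : SmallWeights L n m ε) (k : Fin L)
    {r : GV L n m} (hr : r ∈ core) :
    lowerDist ε (x k) r ≤ lowerDist ε (x k) (h : GV L n m) := by
  obtain ⟨hε, hx, ha, hb⟩ := hw
  cases r <;> simp only [lowerDist] <;> grind [x_notMem_core]

theorem lowerDist_z_lt_of_lowerDist_x_lt (hw : SmallWeights L n m ε) {k : Fin L}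
    {q r : GV L n m} (hq : q ∈ core) (hqh : q ≠ h) (hqb : ∀ j, q ≠ b j) (hr : r ∈ core)
    (hlt : lowerDist ε (x k) q < lowerDist ε (x k) r) : lowerDist ε z q < lowerDist ε z r := by
  obtain ⟨hε, hx, ha, hb⟩ := hw
  cases q <;> cases r <;> simp only [lowerDist] at hlt ⊢ <;> grind [x_notMem_core]

theorem lowerDist_a_lt_of_lowerDist_x_lt (hw : SmallWeights L n m ε) {k : Fin L}
    {i : Fin n} {j : Fin m} {r : GV L n m}
    (hlt : lowerDist ε (x k) (b j : GV L n m) < lowerDist ε (x k) r) :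
    lowerDist ε (a i : GV L n m) (b j) < lowerDist ε (a i) r := by
  obtain ⟨hε, hx, ha, hb⟩ := hw
  cases r <;> simp only [lowerDist] at hlt ⊢ <;> grind

theorem lowerDist_x_sub_lowerDist_x {p : GV L n m} (hp : p ∈ core) (k k' : Fin L) :
    lowerDist ε (x k) p - lowerDist ε (x k') p = (k.val + 1) * ε - (k'.val + 1) * ε := by
  cases p <;> simp only [lowerDist] <;> grind [x_notMem_core]

theorem twenty_le_lowerDist_x (hw : SmallWeights L n m ε) (k : Fin L) {p : GV L n m}
    (hp : p ∈ core) : 20 ≤ lowerDist ε (x k) p := by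
  obtain ⟨hε, hx, ha, hb⟩ := hw
  cases p <;> simp only [lowerDist] <;> grind [x_notMem_core]

end Table

section Metric

variable {T : Fin m → Finset (Fin n)} {ε : ℝ} {d : GV L n m → GV L n m → ℝ}
  {Hs : Finset (Fin n)}

theorem _root_.IsGadgetSPMetric.abs_sub_le (hd : IsGadgetSPMetric T ε d) {f : GV L n m → ℝ}
    (hf : GadgetEdgeBounds T ε fun p q => |f p - f q|) (p q : GV L n m) : |f p - f q| ≤ d p q :=
  hd.2.2 _ (isPseudoMetric_abs_sub f) hf p q

/-- For `m = 0` the vertex `h` is isolated, so no greatest pseudometric exists. -/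
theorem _root_.IsGadgetSPMetric.m_pos (hd : IsGadgetSPMetric T ε d) : 0 < m := by
  refine Nat.pos_of_ne_zero fun hm => ?_
  subst hm
  let χ : GV L n 0 → ℝ := fun | h => 1 | _ => 0
  obtain ⟨hxz, -, hzy, hza, hzu, hau, -, -⟩ := hd.2.1
  have hχ : GadgetEdgeBounds T ε fun p q => d p q + |χ p - χ q| :=
    ⟨fun k => by simpa [χ] using hxz k, fun _ j => j.elim0, by simpa [χ] using hzy,
      fun i => by simpa [χ] using hza i, by simpa [χ] using hzu,
      fun i => by simpa [χ] using hau i,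
      fun _ j => j.elim0, fun j => j.elim0⟩
  have := hd.2.2 _ (hd.1.add (isPseudoMetric_abs_sub χ)) hχ z h
  norm_num [χ] at this

theorem _root_.IsGadgetSPMetric.lowerDist_le (hd : IsGadgetSPMetric T ε d)
    (hw : SmallWeights L n m ε) (c v : GV L n m) : lowerDist ε c v ≤ d c v := by
  have := hd.abs_sub_le (gadgetEdgeBounds_lowerDist hw c) c v
  rw [lowerDist_self, zero_sub, abs_neg] at this
  exact (le_abs_self _).trans this

variable (hd : IsGadgetSPMetric T ε d)
include hd

theorem dist_z_le_lowerDist {q : GV L n m} (hqh : q ≠ h) (hqb : ∀ j, q ≠ b j) :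
    d z q ≤ lowerDist ε z q := by
  obtain ⟨hxz, -, hzy, hza, hzu, -, -, -⟩ := hd.2.1
  rcases q with k | _ | _ | _ | _ | i | j <;> simp only [lowerDist]
  · rw [hd.1.symm]; exact hxz k
  · exact (hd.1.1 z).le
  · exact hzy
  · exact hzu
  · exact absurd rfl hqh
  · exact hza i
  · exact absurd rfl (hqb j)

variable (hw : SmallWeights L n m ε)
include hw

theorem dist_x_eq_lowerDist {v : GV L n m} (hv : v ∈ core) (k : Fin L) :
    d (x k) v = lowerDist ε (x k) v := by
  refine le_antisymm ?_ (hd.lowerDist_le hw _ _)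
  obtain ⟨hxz, hxb, hzy, hza, hzu, -, -, hbh⟩ := hd.2.1
  have tri := hd.1.triangle
  have hm := hd.m_pos
  rcases v with _ | _ | _ | _ | _ | i | j <;> simp only [lowerDist]
  · exact absurd hv (x_notMem_core _)
  · exact hxz k
  · linarith [tri (x k) z y, hxz k]
  · linarith [tri (x k) z u, hxz k]
  · -- through `b 0`, the set vertex whose edges carry the smallest perturbation `ε`
    have h₁ := hxb k ⟨0, hm⟩
    have h₂ := hbh ⟨0, hm⟩
    simp only [Nat.cast_zero, zero_add, one_mul] at h₁ h₂
    linarith [tri (x k) (b ⟨0, hm⟩) h]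
  · linarith [tri (x k) z (a i), hxz k, hza i]
  · linarith [hxb k j]

theorem dist_z_lt_four (hT : ∀ j, (T j).Nonempty) {v : GV L n m} (hv : v ∈ core) :
    d z v < 4 := by
  obtain ⟨-, -, hzy, hza, hzu, -, hab, hbh⟩ := hd.2.1
  have tri := hd.1.triangle
  have hzb : ∀ j, d z (b j) < 2.1 := fun j => by
    obtain ⟨i, hi⟩ := hT j
    linarith [tri z (a i) (b j), hza i, hab i j hi, (hw.a i).2, (hw.b j).2]
  rcases v with _ | _ | _ | _ | _ | i | j
  · exact absurd hv (x_notMem_core _)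
  · linarith [hd.1.1 z]
  · linarith
  · linarith
  · obtain ⟨j₀⟩ : Nonempty (Fin m) := ⟨⟨0, hd.m_pos⟩⟩
    linarith [tri z (b j₀) h, hzb j₀, hbh j₀, (hw.b j₀).2]
  · linarith [hza i, (hw.a i).2]
  · exact (hzb j).trans (by norm_num)

theorem z_mem_iBGPSafeSet_x_x {k k' : Fin L} (hk : k ≠ k') :
    z ∈ iBGPSafeSet d (x k) (x k') := by
  refine hd.1.mem_iBGPSafeSet_of_add_le ?_
  calc d (x k) z + d z (x k') ≤ 20 + (k.val + 1) * ε + (20 + (k'.val + 1) * ε) :=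
        add_le_add (hd.2.1.1 k) (by rw [hd.1.symm]; exact hd.2.1.1 k')
    _ = lowerDist ε (x k) (x k') := by simp only [lowerDist, if_neg hk.symm]; ring
    _ ≤ d (x k) (x k') := hd.lowerDist_le hw _ _

theorem z_mem_iBGPSafeSet_x_core (hT : ∀ j, (T j).Nonempty) {q : GV L n m} (hq : q ∈ core)
    (hqb : ∀ j, q ≠ b j) (k : Fin L) : z ∈ iBGPSafeSet d (x k) q := by
  refine Or.inl fun r hr => ?_
  rcases eq_x_or_mem_core r with ⟨k', rfl⟩ | hr'
  · calc d z q < 4 := dist_z_lt_four hd hw hT hq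
      _ ≤ 20 + (k'.val + 1) * ε := by linarith [(hw.x k').1, hw.pos]
      _ ≤ d z (x k') := hd.lowerDist_le hw z (x k')
  rw [dist_x_eq_lowerDist hd hw hq, dist_x_eq_lowerDist hd hw hr'] at hr
  obtain rfl | hqh := eq_or_ne q h
  · exact absurd (lowerDist_x_le_lowerDist_x_h hw k hr') hr.not_ge
  calc d z q ≤ lowerDist ε z q := dist_z_le_lowerDist hd hqh hqb
    _ < lowerDist ε z r := lowerDist_z_lt_of_lowerDist_x_lt hw hq hqh hqb hr' hr
    _ ≤ d z r := hd.lowerDist_le hw z r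

theorem a_mem_iBGPSafeSet_x_b {i : Fin n} {j : Fin m} (hi : i ∈ T j) (k : Fin L) :
    a i ∈ iBGPSafeSet d (x k) (b j) := by
  refine Or.inl fun r hr => ?_
  obtain ⟨-, -, -, -, -, -, hab_edge, -⟩ := hd.2.1
  have hab : d (a i) (b j) ≤ lowerDist ε (a i : GV L n m) (b j) := by
    simp only [lowerDist]; linarith [hab_edge i j hi]
  rcases eq_x_or_mem_core r with ⟨k', rfl⟩ | hr'
  · calc d (a i) (b j) ≤ 1 + (i.val + 1) * ε + (j.val + 1) * ε := hab
      _ < 21 + (i.val + 1) * ε + (k'.val + 1) * ε := by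
        linarith [(hw.b j).2, (hw.x k').1, hw.pos]
      _ ≤ d (a i) (x k') := hd.lowerDist_le hw (a i) (x k')
  rw [dist_x_eq_lowerDist hd hw (by simp [core]), dist_x_eq_lowerDist hd hw hr'] at hr
  calc d (a i) (b j) ≤ lowerDist ε (a i : GV L n m) (b j) := hab
    _ < lowerDist ε (a i) r := lowerDist_a_lt_of_lowerDist_x_lt hw hr
    _ ≤ d (a i) r := hd.lowerDist_le hw (a i) r

theorem z_mem_iBGPSafeSet_core_x (hT : ∀ j, (T j).Nonempty) {p : GV L n m} (hp : p ∈ core)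
    (k : Fin L) : z ∈ iBGPSafeSet d p (x k) := by
  refine Or.inl fun r hr => ?_
  have hpx : ∀ k, d p (x k) = lowerDist ε (x k) p := fun k => by
    rw [hd.1.symm, dist_x_eq_lowerDist hd hw hp]
  rcases eq_x_or_mem_core r with ⟨k', rfl⟩ | hr'
  · have hkk' : (k.val + 1) * ε < (k'.val + 1) * ε := by
      rw [hpx, hpx] at hr
      linarith [lowerDist_x_sub_lowerDist_x (ε := ε) hp k' k]
    calc d z (x k) ≤ 20 + (k.val + 1) * ε := by rw [hd.1.symm]; exact hd.2.1.1 k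
      _ < 20 + (k'.val + 1) * ε := by linarith
      _ ≤ d z (x k') := hd.lowerDist_le hw z (x k')
  · -- all non-`x` vertices are within `8` of each other, and `x k` is `20` away
    refine absurd hr (not_lt.2 ?_)
    calc d p r ≤ d p z + d z r := hd.1.triangle p z r
      _ ≤ 20 := by
        linarith [dist_z_lt_four hd hw hT hp, dist_z_lt_four hd hw hT hr', hd.1.symm p z]
      _ ≤ d p (x k) := by rw [hpx]; exact twenty_le_lowerDist_x hw k hp

theorem hasSafeWalk_x_core (hHs : IsHittingSet T Hs) {q : GV L n m} (hq : q ∈ core) (k : Fin L) :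
    HasSafeWalk d (feasibleEdges Hs : Finset (Sym2 (GV L n m))) (x k) q := by
  have hT := hHs.nonempty
  have hz : (z : GV L n m) ∈ core := by simp [core]
  rcases q with _ | _ | _ | _ | _ | i | j
  · exact absurd hq (x_notMem_core _)
  · exact hasSafeWalk_of_mem (Sym2.eq_swap ▸ mk_x_z_mem_feasibleEdges k) (by simp)
  case b =>
    obtain ⟨i, hiH, hiT⟩ := hHs j
    exact hasSafeWalk_of_mem_of_mem (mk_mem_feasibleEdges hq (by simp [core]))
      (Sym2.eq_swap ▸ mk_x_a_mem_feasibleEdges k hiH) (by simp) (by simp)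
      (a_mem_iBGPSafeSet_x_b hd hw hiT k)
  all_goals
    exact hasSafeWalk_of_mem_of_mem (mk_mem_feasibleEdges hq hz)
      (Sym2.eq_swap ▸ mk_x_z_mem_feasibleEdges k) (by simp) (by simp)
      (z_mem_iBGPSafeSet_x_core hd hw hT hq (by simp) k)

theorem iBGPFeasible_feasibleEdges (hHs : IsHittingSet T Hs) :
    iBGPFeasible d (feasibleEdges Hs : Finset (Sym2 (GV L n m))) := by
  have hT := hHs.nonempty
  have hz : (z : GV L n m) ∈ core := by simp [core]
  intro p q
  rcases eq_x_or_mem_core p with ⟨k, rfl⟩ | hp <;>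
    rcases eq_x_or_mem_core q with ⟨k', rfl⟩ | hq
  · obtain rfl | hk := eq_or_ne k' k
    · exact hasSafeWalk_self _
    · exact hasSafeWalk_of_mem_of_mem (mk_x_z_mem_feasibleEdges k')
        (Sym2.eq_swap ▸ mk_x_z_mem_feasibleEdges k) (by simp) (by simp)
        (z_mem_iBGPSafeSet_x_x hd hw hk.symm)
  · exact hasSafeWalk_x_core hd hw hHs hq k
  · obtain rfl | hpz := eq_or_ne p z
    · exact hasSafeWalk_of_mem (mk_x_z_mem_feasibleEdges k') (by simp)
    · exact hasSafeWalk_of_mem_of_mem (mk_x_z_mem_feasibleEdges k') (mk_mem_feasibleEdges hz hp)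
        (by simp) hpz.symm (z_mem_iBGPSafeSet_core_x hd hw hT hp k')
  · obtain rfl | hqp := eq_or_ne q p
    · exact hasSafeWalk_self _
    · exact hasSafeWalk_of_mem (mk_mem_feasibleEdges hq hp) hqp

end Metric

end GV

theorem stmt7_general (L n m : ℕ) (T : Fin m → Finset (Fin n))
    (hstar : ℕ)
    (hstar_ex : ∃ Hs : Finset (Fin n), IsHittingSet T Hs ∧ Hs.card = hstar) :
    ∃ ε₀ : ℝ, 0 < ε₀ ∧ ∀ ε : ℝ, 0 < ε → ε < ε₀ →
      ∀ d : GV L n m → GV L n m → ℝ, IsGadgetSPMetric T ε d →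
        ∃ E : Finset (Sym2 (GV L n m)), iBGPFeasible d ↑E ∧
          E.card ≤ L * hstar + L + (m + n + 4) ^ 2 := by
  obtain ⟨Hs, hHs, rfl⟩ := hstar_ex
  refine ⟨1 / (100 * (L + n + m + 1)), by positivity, fun ε hε hε' d hd => ?_⟩
  exact ⟨GV.feasibleEdges Hs,
    GV.iBGPFeasible_feasibleEdges hd (GV.smallWeights_of_lt hε hε') hHs,
    GV.card_feasibleEdges_le Hs⟩

/-- In the duplicated gadget with `ℓ` copies of `x` (with sufficiently small
`ε > 0` and `d` the induced shortest-path metric), there is a feasible iBGP edge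
set with at most `ℓ · h* + ℓ + (m + n + 4)²` edges, where `h*` is the minimum
hitting set size. -/
theorem stmt7 (L n m : ℕ) (hL : 1 ≤ L) (T : Fin m → Finset (Fin n))
    (hstar : ℕ)
    (hstar_ex : ∃ Hs : Finset (Fin n), IsHittingSet T Hs ∧ Hs.card = hstar)
    (hstar_min : ∀ Hs : Finset (Fin n), IsHittingSet T Hs → hstar ≤ Hs.card) :
    ∃ ε₀ : ℝ, 0 < ε₀ ∧ ∀ ε : ℝ, 0 < ε → ε < ε₀ →
      ∀ d : GV L n m → GV L n m → ℝ, IsGadgetSPMetric T ε d →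
        ∃ E : Finset (Sym2 (GV L n m)), iBGPFeasible d ↑E ∧
          E.card ≤ L * hstar + L + (m + n + 4) ^ 2 :=
  stmt7_general L n m T hstar hstar_ex
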